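/- arXiv:2602.17379 — 4 statements merged into one kernel-verified Lean document; each statement's English description precedes it below -/
import Mathlib

section
/- Let I = C ⊕ [−Δ, Δ] ⊆ ℝ^{l×p} be an interval matrix and M = ⟨M_C; G₁,…,G_g⟩ ⊆ ℝ^{p×q} a matrix zonotope. Define F = Δ(|M_C| + Σⱼ|Gⱼ|) ∈ ℝ^{l×q} and let F^{(1)},…,F^{(lq)} be the entrywise decomposition of F. Then the exact set product IM = {NP | N ∈ I, P ∈ M} is contained in the matrix zonotope T_I(M) = ⟨C M_C; C G₁,…,C G_g, F^{(1)},…,F^{(lq)}⟩. -/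
/-!
Write `N = C + D` with `|D| ≤ Δ` entrywise, so that `N P = C P + D P`. The map `P ↦ C P` is
linear, so it sends `⟨M_C; G⟩` onto `⟨C M_C; C G⟩`. The remainder `D P` is only controlled
entrywise: `|P| ≤ |M_C| + Σⱼ |Gⱼ|` on `⟨M_C; G⟩`, hence `|D P| ≤ F`, and the box `{E | |E| ≤ F}`
is exactly the zonotope `⟨0; F^{(1)},…,F^{(lq)}⟩`. Zonotopes add by concatenating generators.
-/

/-- Elementwise set product of two sets of real matrices. -/
def mprod {p q r : ℕ} (A : Set (Matrix (Fin p) (Fin q) ℝ))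
    (B : Set (Matrix (Fin q) (Fin r) ℝ)) : Set (Matrix (Fin p) (Fin r) ℝ) :=
  {x | ∃ a ∈ A, ∃ b ∈ B, x = a * b}

/-- Interval matrix C ⊕ [−Δ, Δ]. -/
def intv {p q : ℕ} (C Δ : Matrix (Fin p) (Fin q) ℝ) : Set (Matrix (Fin p) (Fin q) ℝ) :=
  {M | ∀ i j, |M i j - C i j| ≤ Δ i j}

/-- Entrywise absolute value of a matrix. -/
def aent {p q : ℕ} (M : Matrix (Fin p) (Fin q) ℝ) : Matrix (Fin p) (Fin q) ℝ :=
  Matrix.of fun i j => |M i j|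

/-- Matrix zonotope ⟨C; G⟩ = {C + Σᵢ βᵢ Gᵢ | |βᵢ| ≤ 1}. -/
def zono {p q : ℕ} {ι : Type*} [Fintype ι] (C : Matrix (Fin p) (Fin q) ℝ)
    (G : ι → Matrix (Fin p) (Fin q) ℝ) : Set (Matrix (Fin p) (Fin q) ℝ) :=
  {M | ∃ β : ι → ℝ, (∀ i, |β i| ≤ 1) ∧ M = C + ∑ i, β i • G i}

/-- Entrywise decomposition: `edec M k` keeps the entry of `M` at position `k`. -/
def edec {l q : ℕ} (M : Matrix (Fin l) (Fin q) ℝ) (k : Fin l × Fin q) :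
    Matrix (Fin l) (Fin q) ℝ :=
  Matrix.of fun i j => if (i, j) = k then M i j else 0

section Zonotope

variable {l p q : ℕ} {ι κ : Type*} [Fintype ι] [Fintype κ]

theorem abs_mul_apply_le {D Δ : Matrix (Fin l) (Fin p) ℝ}
    {P B : Matrix (Fin p) (Fin q) ℝ} (hD : ∀ i m, |D i m| ≤ Δ i m)
    (hP : ∀ m j, |P m j| ≤ B m j) (i : Fin l) (j : Fin q) :
    |(D * P) i j| ≤ (Δ * B) i j := by
  simp only [Matrix.mul_apply]
  refine (Finset.abs_sum_le_sum_abs _ _).trans (Finset.sum_le_sum fun m _ => ?_)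
  rw [abs_mul]
  exact mul_le_mul (hD i m) (hP m j) (abs_nonneg _) ((abs_nonneg _).trans (hD i m))

theorem add_mem_zono {C D X Y : Matrix (Fin p) (Fin q) ℝ}
    {G : ι → Matrix (Fin p) (Fin q) ℝ} {H : κ → Matrix (Fin p) (Fin q) ℝ}
    (hX : X ∈ zono C G) (hY : Y ∈ zono D H) : X + Y ∈ zono (C + D) (Sum.elim G H) := by
  obtain ⟨β, hβ, rfl⟩ := hX
  obtain ⟨γ, hγ, rfl⟩ := hY
  refine ⟨Sum.elim β γ, fun k => k.rec hβ hγ, ?_⟩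
  rw [Fintype.sum_sum_type]
  simp only [Sum.elim_inl, Sum.elim_inr]
  abel

theorem mul_mem_zono_mul {C : Matrix (Fin l) (Fin p) ℝ} {Mc P : Matrix (Fin p) (Fin q) ℝ}
    {G : ι → Matrix (Fin p) (Fin q) ℝ} (hP : P ∈ zono Mc G) :
    C * P ∈ zono (C * Mc) (fun i => C * G i) := by
  obtain ⟨β, hβ, rfl⟩ := hP
  exact ⟨β, hβ, by simp only [Matrix.mul_add, Matrix.mul_sum, Matrix.mul_smul]⟩

theorem abs_apply_le_of_mem_zono {Mc P : Matrix (Fin p) (Fin q) ℝ}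
    {G : ι → Matrix (Fin p) (Fin q) ℝ} (hP : P ∈ zono Mc G) (i : Fin p) (j : Fin q) :
    |P i j| ≤ (aent Mc + ∑ t, aent (G t)) i j := by
  obtain ⟨β, hβ, rfl⟩ := hP
  simp only [aent, Matrix.add_apply, Matrix.sum_apply, Matrix.smul_apply, Matrix.of_apply,
    smul_eq_mul]
  calc |Mc i j + ∑ t, β t * G t i j|
      ≤ |Mc i j| + ∑ t, |β t * G t i j| :=
        (abs_add_le _ _).trans (add_le_add_right (Finset.abs_sum_le_sum_abs _ _) _)
    _ ≤ |Mc i j| + ∑ t, |G t i j| := by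
        refine add_le_add_right (Finset.sum_le_sum fun t _ => ?_) _
        rw [abs_mul]
        exact mul_le_of_le_one_left (abs_nonneg _) (hβ t)

theorem sum_smul_edec (F : Matrix (Fin l) (Fin q) ℝ) (c : Fin l × Fin q → ℝ) :
    ∑ k, c k • edec F k = Matrix.of fun i j => c (i, j) * F i j := by
  ext i j
  rw [Matrix.sum_apply, Fintype.sum_eq_single (i, j)]
  · simp [edec]
  · intro k hk
    simp [edec, Ne.symm hk]

theorem mem_zono_zero_edec_of_abs_le {E F : Matrix (Fin l) (Fin q) ℝ}
    (hEF : ∀ i j, |E i j| ≤ F i j) : E ∈ zono 0 (edec F) := by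
  have hF : ∀ i j, 0 ≤ F i j := fun i j => (abs_nonneg _).trans (hEF i j)
  -- where `F i j = 0` also `E i j = 0`, and the junk quotient `0 / 0 = 0` is harmless
  have hzero : ∀ i j, F i j = 0 → E i j = 0 := fun i j h =>
    abs_nonpos_iff.mp (h ▸ hEF i j)
  refine ⟨fun k => E k.1 k.2 / F k.1 k.2, fun k => ?_, ?_⟩
  · rw [abs_div, abs_of_nonneg (hF _ _)]
    exact div_le_one_of_le₀ (hEF _ _) (hF _ _)
  · rw [zero_add, sum_smul_edec]
    ext i j
    exact (div_mul_cancel_of_imp (hzero i j)).symm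

end Zonotope

theorem stmt9_general {l p q g : ℕ} (C Δ : Matrix (Fin l) (Fin p) ℝ)
    (Mc : Matrix (Fin p) (Fin q) ℝ) (G : Fin g → Matrix (Fin p) (Fin q) ℝ) :
    mprod (intv C Δ) (zono Mc G) ⊆
      zono (C * Mc)
        (Sum.elim (fun i : Fin g => C * G i)
          (fun k : Fin l × Fin q => edec (Δ * (aent Mc + ∑ j, aent (G j))) k)) := by
  rintro _ ⟨N, hN, P, hP, rfl⟩
  have hsplit : N * P = C * P + (N - C) * P := by rw [Matrix.sub_mul]; abel
  have hrem : (N - C) * P ∈ zono 0 (edec (Δ * (aent Mc + ∑ j, aent (G j)))) :=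
    mem_zono_zero_edec_of_abs_le (abs_mul_apply_le hN (abs_apply_le_of_mem_zono hP))
  simpa only [hsplit, add_zero] using add_mem_zono (mul_mem_zono_mul (C := C) hP) hrem

/-- IM ⊆ T_I(M): the exact set product of an interval matrix and a matrix zonotope
is contained in the matrix zonotope
⟨C M_C; C G₁,…,C G_g, F^{(1)},…,F^{(lq)}⟩ with F = Δ(|M_C| + Σⱼ|Gⱼ|). -/
theorem stmt9 {l p q g : ℕ} (C Δ : Matrix (Fin l) (Fin p) ℝ)
    (Mc : Matrix (Fin p) (Fin q) ℝ) (G : Fin g → Matrix (Fin p) (Fin q) ℝ)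
    (hΔ : ∀ i j, 0 ≤ Δ i j) :
    mprod (intv C Δ) (zono Mc G) ⊆
      zono (C * Mc)
        (Sum.elim (fun i : Fin g => C * G i)
          (fun k : Fin l × Fin q => edec (Δ * (aent Mc + ∑ j, aent (G j))) k)) :=
  stmt9_general C Δ Mc G
end

section
/- Let Ĥ be a square matrix (the nominal closed loop Â_K), Δ_K ≥ 0 a nonnegative matrix, and Δ_S ≥ 0. Define F₀ = Δ_S and F_{j+1} = Δ_K Σ_{i=0}^{j} |Ĥ^{j−i}| Fᵢ for j ≥ 0. Define P₁ = I and P_{j+1} = |Ĥ^j| + Σ_{h=1}^{j} P_h Δ_K |Ĥ^{j−h}| for j ≥ 1. Then F_j = Δ_K P_j Δ_S for all j ≥ 1. -/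
lemma aent_one {n : ℕ} : aent (1 : Matrix (Fin n) (Fin n) ℝ) = 1 := by
  ext i j
  by_cases h : i = j <;> simp [aent, Matrix.one_apply, h]

/-- With F₀ = Δ_S, F_{j+1} = Δ_K Σ_{i=0}^{j} |Ĥ^{j−i}| Fᵢ, P₁ = I and
P_{j+1} = |Ĥ^j| + Σ_{h=1}^{j} P_h Δ_K |Ĥ^{j−h}|, one has F_j = Δ_K P_j Δ_S for j ≥ 1. -/
theorem stmt13 {n q : ℕ} (Hhat ΔK : Matrix (Fin n) (Fin n) ℝ)
    (ΔS : Matrix (Fin n) (Fin q) ℝ)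
    (hΔK : ∀ i j, 0 ≤ ΔK i j) (hΔS : ∀ i j, 0 ≤ ΔS i j)
    (F : ℕ → Matrix (Fin n) (Fin q) ℝ) (P : ℕ → Matrix (Fin n) (Fin n) ℝ)
    (hF0 : F 0 = ΔS)
    (hF : ∀ j, F (j + 1) = ΔK * ∑ i ∈ Finset.range (j + 1), aent (Hhat ^ (j - i)) * F i)
    (hP1 : P 1 = 1)
    (hP : ∀ j, 1 ≤ j →
      P (j + 1) = aent (Hhat ^ j) + ∑ h ∈ Finset.Icc 1 j, P h * (ΔK * aent (Hhat ^ (j - h)))) :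
    ∀ j, 1 ≤ j → F j = ΔK * P j * ΔS := by
  have hA0 : aent (Hhat ^ 0) = 1 := by rw [pow_zero]; exact aent_one
  -- Key: P also satisfies the "left" recursion.
  have key : ∀ j, 1 ≤ j → P (j + 1)
      = aent (Hhat ^ j) + ∑ i ∈ Finset.Icc 1 j, aent (Hhat ^ (j - i)) * (ΔK * P i) := by
    intro j
    induction j using Nat.strong_induction_on with
    | _ j IH =>
      intro hj
      have expandL : ∀ h ∈ Finset.Icc 1 j,
          P h * (ΔK * aent (Hhat ^ (j - h)))
          = (aent (Hhat ^ (h - 1))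
              + ∑ i ∈ Finset.Icc 1 (h - 1), aent (Hhat ^ (h - 1 - i)) * (ΔK * P i))
            * (ΔK * aent (Hhat ^ (j - h))) := by
        intro h hh
        simp only [Finset.mem_Icc] at hh
        rcases eq_or_lt_of_le hh.1 with h1 | h1
        · rw [← h1]; simp [hP1, aent_one]
        · have e := IH (h - 1) (by omega) (by omega)
          have hrw : h - 1 + 1 = h := by omega
          rw [hrw] at e
          rw [e]
      have expandR : ∀ i ∈ Finset.Icc 1 j,
          aent (Hhat ^ (j - i)) * (ΔK * P i)
          = aent (Hhat ^ (j - i)) * (ΔK *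
              (aent (Hhat ^ (i - 1))
                + ∑ h ∈ Finset.Icc 1 (i - 1), P h * (ΔK * aent (Hhat ^ (i - 1 - h))))) := by
        intro i hi
        simp only [Finset.mem_Icc] at hi
        rcases eq_or_lt_of_le hi.1 with h1 | h1
        · rw [← h1]; simp [hP1, aent_one]
        · have e := hP (i - 1) (by omega)
          have hrw : i - 1 + 1 = i := by omega
          rw [hrw] at e
          rw [e]
      rw [hP j hj, Finset.sum_congr rfl expandL, Finset.sum_congr rfl expandR]
      simp only [add_mul, mul_add, Finset.sum_add_distrib, Finset.sum_mul, Finset.mul_sum]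
      congr 1
      congr 1
      -- single-sum part
      · refine Finset.sum_nbij' (fun h => j + 1 - h) (fun h => j + 1 - h) ?_ ?_ ?_ ?_ ?_
        · intro a ha; simp only [Finset.mem_Icc] at *; omega
        · intro a ha; simp only [Finset.mem_Icc] at *; omega
        · intro a ha; simp only [Finset.mem_Icc] at *; omega
        · intro a ha; simp only [Finset.mem_Icc] at *; omega
        · intro a ha
          simp only [Finset.mem_Icc] at ha
          have e1 : j - (j + 1 - a) = a - 1 := by omega
          have e2 : j + 1 - a - 1 = j - a := by omega
          rw [e1, e2]
      -- double-sum part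
      · rw [Finset.sum_sigma', Finset.sum_sigma']
        refine Finset.sum_nbij' (fun p => ⟨j + 1 - p.1 + p.2, p.2⟩)
          (fun p => ⟨j + 1 - p.1 + p.2, p.2⟩) ?_ ?_ ?_ ?_ ?_
        · rintro ⟨a, b⟩ ha
          simp only [Finset.mem_sigma, Finset.mem_Icc] at *; omega
        · rintro ⟨a, b⟩ ha
          simp only [Finset.mem_sigma, Finset.mem_Icc] at *; omega
        · rintro ⟨a, b⟩ ha
          simp only [Finset.mem_sigma, Finset.mem_Icc] at ha
          simp only [Sigma.mk.inj_iff, heq_eq_eq, and_true]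
          omega
        · rintro ⟨a, b⟩ ha
          simp only [Finset.mem_sigma, Finset.mem_Icc] at ha
          simp only [Sigma.mk.inj_iff, heq_eq_eq, and_true]
          omega
        · rintro ⟨a, b⟩ ha
          simp only [Finset.mem_sigma, Finset.mem_Icc] at ha
          have e1 : j - (j + 1 - a + b) = a - 1 - b := by omega
          have e2 : j + 1 - a + b - 1 - b = j - a := by omega
          simp only [e1, e2, mul_assoc]
  -- main induction
  intro j
  induction j using Nat.strong_induction_on with
  | _ j IH =>
    intro hj
    obtain ⟨k, rfl⟩ : ∃ k, j = k + 1 := ⟨j - 1, by omega⟩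
    rcases Nat.eq_zero_or_pos k with hk | hk
    · subst hk
      rw [hF 0]
      simp [hF0, hP1, aent_one]
    · rw [hF k]
      have hsplit : Finset.range (k + 1) = insert 0 (Finset.Icc 1 k) := by
        ext x; simp [Finset.mem_range, Finset.mem_Icc]; omega
      rw [hsplit, Finset.sum_insert (by simp)]
      have hterms : ∀ i ∈ Finset.Icc 1 k,
          aent (Hhat ^ (k - i)) * F i = aent (Hhat ^ (k - i)) * (ΔK * (P i * ΔS)) := by
        intro i hi
        simp only [Finset.mem_Icc] at hi
        rw [IH i (by omega) hi.1, Matrix.mul_assoc ΔK (P i) ΔS]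
      rw [Finset.sum_congr rfl hterms, Nat.sub_zero, hF0, key k hk]
      have hrhs : ΔK * (aent (Hhat ^ k)
            + ∑ i ∈ Finset.Icc 1 k, aent (Hhat ^ (k - i)) * (ΔK * P i)) * ΔS
          = ΔK * (aent (Hhat ^ k) * ΔS
            + ∑ i ∈ Finset.Icc 1 k, aent (Hhat ^ (k - i)) * (ΔK * (P i * ΔS))) := by
        rw [Matrix.mul_assoc, Matrix.add_mul, Matrix.sum_mul]
        congr 1
        congr 1
        refine Finset.sum_congr rfl fun x hx => ?_
        rw [Matrix.mul_assoc (aent (Hhat ^ (k - x))), Matrix.mul_assoc ΔK (P x) ΔS]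
      rw [hrhs]
end

section
/- Let Ĥ = Â_K be a square matrix, Δ_K ≥ 0 and Δ_S ≥ 0 nonnegative matrices with Δ_K = Δ_S |M_K| for some matrix M_K. Let I_Δ be the symmetric interval matrix [−Δ_S, Δ_S] viewed as a matrix zonotope with generators given by the entrywise decomposition of Δ_S, and let I_{A_K} = Ĥ ⊕ [−Δ_K, Δ_K]. Then the j-fold application of T_{I_{A_K}} to I_Δ equals the matrix zonotope ⟨0; Ĥ^j E(F₀), Ĥ^{j−1} E(F₁), …, E(F_j)⟩, where F₀ = Δ_S, F_{j+1} = Δ_K Σ_{i=0}^{j} |Ĥ^{j−i}| Fᵢ, and E(·) denotes entrywise decomposition. Consequently, the tightest interval containing T^j_{I_{A_K}}(I_Δ) is [−Σ_{i=0}^{j} |Ĥ^{j−i}| Fᵢ, Σ_{i=0}^{j} |Ĥ^{j−i}| Fᵢ]. -/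
/-- Interval matrix {M | L ≤ M ≤ U}. -/
def box {p q : ℕ} (L U : Matrix (Fin p) (Fin q) ℝ) : Set (Matrix (Fin p) (Fin q) ℝ) :=
  {M | ∀ i j, L i j ≤ M i j ∧ M i j ≤ U i j}

/-- Matrix zonotope with a list of generators. -/
def zonoL {p q : ℕ} (C : Matrix (Fin p) (Fin q) ℝ)
    (G : List (Matrix (Fin p) (Fin q) ℝ)) : Set (Matrix (Fin p) (Fin q) ℝ) :=
  {M | ∃ β : Fin G.length → ℝ, (∀ i, |β i| ≤ 1) ∧ M = C + ∑ i, β i • G.get i}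

/-- The entrywise decomposition E(M), as a list of matrices. -/
noncomputable def edecL {l q : ℕ} (M : Matrix (Fin l) (Fin q) ℝ) :
    List (Matrix (Fin l) (Fin q) ℝ) :=
  (Finset.univ : Finset (Fin l × Fin q)).toList.map (edec M)

/-- The operator T_I on (center, generator-list) representations of matrix zonotopes,
for the interval matrix I = C ⊕ [−Δ, Δ]. -/
noncomputable def Tmap {n q : ℕ} (C Δ : Matrix (Fin n) (Fin n) ℝ)
    (Z : Matrix (Fin n) (Fin q) ℝ × List (Matrix (Fin n) (Fin q) ℝ)) :
    Matrix (Fin n) (Fin q) ℝ × List (Matrix (Fin n) (Fin q) ℝ) :=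
  (C * Z.1, Z.2.map (fun X => C * X) ++ edecL (Δ * (aent Z.1 + (Z.2.map aent).sum)))


/-!
Because the initial zonotope has centre `0`, every iterate keeps centre `0`, so `T` only multiplies
the old generators by `Ĥ` and appends `E(Δ_K · Σ |Gᵢ|)`. For `M ≥ 0` the generators `A M⁽ᵏ⁾` of
`A · E(M)` satisfy `Σₖ |A M⁽ᵏ⁾| = |A| M`, so by induction the appended block at step `j + 1` is
exactly `E(F_{j+1})` and the absolute generator sum at step `j` is `Σᵢ |Ĥ^{j-i}| Fᵢ`. The tightest
interval around a zero-centred zonotope has radius the absolute generator sum: choosing the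
coefficients `βₖ = ± sign (Gₖ)ᵢⱼ` realises both endpoints in each entry.
-/

section EntrywiseDecomposition

variable {p m r : ℕ}

lemma mul_edec_apply (A : Matrix (Fin p) (Fin m) ℝ) (M : Matrix (Fin m) (Fin r) ℝ)
    (k : Fin m × Fin r) (i : Fin p) (j : Fin r) :
    (A * edec M k) i j = if j = k.2 then A i k.1 * M k.1 k.2 else 0 := by
  obtain ⟨k₁, k₂⟩ := k
  by_cases hj : j = k₂
  · subst hj
    simp [Matrix.mul_apply, edec]
  · simp [Matrix.mul_apply, edec, hj]

lemma sum_aent_mul_edec (A : Matrix (Fin p) (Fin m) ℝ) {M : Matrix (Fin m) (Fin r) ℝ}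
    (hM : ∀ i j, 0 ≤ M i j) :
    ∑ k : Fin m × Fin r, aent (A * edec M k) = aent A * M := by
  ext i j
  simp only [Matrix.sum_apply, aent, Matrix.of_apply, mul_edec_apply, Fintype.sum_prod_type,
    apply_ite, abs_zero, Finset.sum_ite_eq, Finset.mem_univ, if_true]
  simp [Matrix.mul_apply, abs_mul, abs_of_nonneg (hM _ _)]

lemma sum_map_aent_mul_edecL (A : Matrix (Fin p) (Fin m) ℝ) {M : Matrix (Fin m) (Fin r) ℝ}
    (hM : ∀ i j, 0 ≤ M i j) :
    ((edecL M).map fun X => aent (A * X)).sum = aent A * M := by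
  rw [edecL, List.map_map, Finset.sum_map_toList]
  exact sum_aent_mul_edec A hM

end EntrywiseDecomposition

lemma sum_map_aent_flatMap_edecL {n q : ℕ} (A : ℕ → Matrix (Fin n) (Fin n) ℝ)
    {F : ℕ → Matrix (Fin n) (Fin q) ℝ} (hF : ∀ i a b, 0 ≤ F i a b) (k : ℕ) :
    (((List.range k).flatMap fun i => (edecL (F i)).map fun X => A i * X).map aent).sum
      = ∑ i ∈ Finset.range k, aent (A i) * F i := by
  rw [List.map_flatMap, List.flatMap, List.sum_flatten, List.map_map, Finset.sum,
    Finset.range_val, Multiset.range]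
  refine congrArg List.sum (List.map_congr_left fun i _ => ?_)
  simpa only [Function.comp_def, List.map_map] using sum_map_aent_mul_edecL (A i) (hF i)

lemma aent_zero {p q : ℕ} : aent (0 : Matrix (Fin p) (Fin q) ℝ) = 0 := by
  ext i j
  simp [aent]

lemma Tmap_iterate_edecL {n q : ℕ} (H Δ : Matrix (Fin n) (Fin n) ℝ)
    {F : ℕ → Matrix (Fin n) (Fin q) ℝ}
    (hF : ∀ j, F (j + 1) = Δ * ∑ i ∈ Finset.range (j + 1), aent (H ^ (j - i)) * F i)
    (hF_nonneg : ∀ i a b, 0 ≤ F i a b) (j : ℕ) :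
    (Tmap H Δ)^[j] (0, edecL (F 0)) =
      (0, (List.range (j + 1)).flatMap fun i => (edecL (F i)).map fun X => H ^ (j - i) * X) := by
  induction j with
  | zero => simp
  | succ k ih =>
    have hshift : ((List.range (k + 1)).flatMap fun i =>
          (edecL (F i)).map fun X => H ^ (k - i) * X).map (fun X => H * X)
        = (List.range (k + 1)).flatMap fun i =>
          (edecL (F i)).map fun X => H ^ (k + 1 - i) * X := by
      rw [List.map_flatMap]
      refine List.flatMap_congr fun i hi => ?_
      rw [List.map_map]
      refine List.map_congr_left fun X _ => ?_
      rw [Function.comp_apply, ← Matrix.mul_assoc, ← pow_succ',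
        Nat.succ_sub (Nat.lt_succ_iff.mp (List.mem_range.mp hi))]
    rw [Function.iterate_succ_apply', ih, Tmap]
    dsimp only
    rw [Matrix.mul_zero, aent_zero, zero_add,
      sum_map_aent_flatMap_edecL (fun i => H ^ (k - i)) hF_nonneg, ← hF k, hshift,
      List.range_succ (n := k + 1), List.flatMap_append]
    simp

section Zonotope

variable {p q : ℕ}

lemma sum_map_aent_apply (G : List (Matrix (Fin p) (Fin q) ℝ)) (i : Fin p) (j : Fin q) :
    (G.map aent).sum i j = ∑ k : Fin G.length, |G.get k i j| := by
  change Matrix.entryAddMonoidHom ℝ i j (G.map aent).sum = _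
  rw [map_list_sum, List.map_map, ← Fin.sum_univ_fun_getElem]
  rfl

lemma zonoL_zero_subset_intv (G : List (Matrix (Fin p) (Fin q) ℝ)) :
    zonoL 0 G ⊆ intv 0 (G.map aent).sum := by
  rintro M ⟨β, hβ, rfl⟩ i j
  simp only [Matrix.zero_apply, sub_zero, Matrix.add_apply, zero_add, Matrix.sum_apply,
    Matrix.smul_apply, smul_eq_mul, sum_map_aent_apply]
  refine (Finset.abs_sum_le_sum_abs _ _).trans (Finset.sum_le_sum fun k _ => ?_)
  rw [abs_mul]
  exact mul_le_of_le_one_left (abs_nonneg _) (hβ k)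

lemma neg_mem_zonoL_zero {G : List (Matrix (Fin p) (Fin q) ℝ)} {M : Matrix (Fin p) (Fin q) ℝ}
    (hM : M ∈ zonoL 0 G) : -M ∈ zonoL 0 G := by
  obtain ⟨β, hβ, rfl⟩ := hM
  exact ⟨-β, fun k => by simpa using hβ k, by simp [Finset.sum_neg_distrib]⟩

lemma exists_mem_zonoL_zero_apply_eq (G : List (Matrix (Fin p) (Fin q) ℝ)) (i : Fin p)
    (j : Fin q) : ∃ M ∈ zonoL 0 G, M i j = (G.map aent).sum i j := by
  refine ⟨∑ k, (SignType.sign (G.get k i j) : ℝ) • G.get k,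
    ⟨fun k => SignType.sign (G.get k i j), fun k => ?_, by simp⟩, ?_⟩
  · show |((SignType.sign (G.get k i j) : SignType) : ℝ)| ≤ 1
    cases SignType.sign (G.get k i j) <;> simp
  · simp [Matrix.sum_apply, sum_map_aent_apply]

lemma intv_subset_box_of_zonoL_subset {G : List (Matrix (Fin p) (Fin q) ℝ)}
    {L U : Matrix (Fin p) (Fin q) ℝ} (h : zonoL 0 G ⊆ box L U) :
    intv 0 (G.map aent).sum ⊆ box L U := by
  intro X hX i j
  obtain ⟨M, hM, hMij⟩ := exists_mem_zonoL_zero_apply_eq G i j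
  have hU := (h hM i j).2
  have hL := (h (neg_mem_zonoL_zero hM) i j).1
  have hXij := abs_le.mp (by simpa using hX i j)
  rw [Matrix.neg_apply] at hL
  constructor <;> linarith [hXij.1, hXij.2]

end Zonotope

lemma entries_nonneg_of_recursion {n q : ℕ} {H Δ : Matrix (Fin n) (Fin n) ℝ}
    {F : ℕ → Matrix (Fin n) (Fin q) ℝ} (hΔ : ∀ i j, 0 ≤ Δ i j) (hF0 : ∀ i j, 0 ≤ F 0 i j)
    (hF : ∀ j, F (j + 1) = Δ * ∑ i ∈ Finset.range (j + 1), aent (H ^ (j - i)) * F i) :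
    ∀ k a b, 0 ≤ F k a b := by
  intro k
  induction k using Nat.strong_induction_on with
  | _ k ih =>
    cases k with
    | zero => exact hF0
    | succ k =>
      intro a b
      rw [hF k, Matrix.mul_apply]
      refine Finset.sum_nonneg fun t _ => mul_nonneg (hΔ a t) ?_
      rw [Matrix.sum_apply]
      refine Finset.sum_nonneg fun i hi => ?_
      rw [Matrix.mul_apply]
      exact Finset.sum_nonneg fun s _ =>
        mul_nonneg (abs_nonneg _) (ih i (Finset.mem_range.mp hi) s b)

theorem stmt14_general {n q : ℕ} (Hhat ΔK : Matrix (Fin n) (Fin n) ℝ)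
    (ΔS : Matrix (Fin n) (Fin q) ℝ)
    (hΔK : ∀ i j, 0 ≤ ΔK i j) (hΔS : ∀ i j, 0 ≤ ΔS i j)
    (F : ℕ → Matrix (Fin n) (Fin q) ℝ)
    (hF0 : F 0 = ΔS)
    (hF : ∀ j, F (j + 1) = ΔK * ∑ i ∈ Finset.range (j + 1), aent (Hhat ^ (j - i)) * F i)
    (j : ℕ) :
    (zonoL ((Tmap Hhat ΔK)^[j] (0, edecL ΔS)).1 ((Tmap Hhat ΔK)^[j] (0, edecL ΔS)).2 =
      zonoL 0 ((List.range (j + 1)).flatMap fun i =>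
        (edecL (F i)).map fun X => Hhat ^ (j - i) * X)) ∧
    (zonoL ((Tmap Hhat ΔK)^[j] (0, edecL ΔS)).1 ((Tmap Hhat ΔK)^[j] (0, edecL ΔS)).2 ⊆
      intv 0 (∑ i ∈ Finset.range (j + 1), aent (Hhat ^ (j - i)) * F i)) ∧
    ∀ L U : Matrix (Fin n) (Fin q) ℝ,
      zonoL ((Tmap Hhat ΔK)^[j] (0, edecL ΔS)).1 ((Tmap Hhat ΔK)^[j] (0, edecL ΔS)).2 ⊆
        box L U →
      intv 0 (∑ i ∈ Finset.range (j + 1), aent (Hhat ^ (j - i)) * F i) ⊆ box L U := by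
  subst hF0
  have hF_nonneg := entries_nonneg_of_recursion hΔK hΔS hF
  rw [Tmap_iterate_edecL Hhat ΔK hF hF_nonneg j,
    ← sum_map_aent_flatMap_edecL (fun i => Hhat ^ (j - i)) hF_nonneg]
  exact ⟨rfl, zonoL_zero_subset_intv _, fun _ _ => intv_subset_box_of_zonoL_subset⟩

/-- T^j_{I_{A_K}}(I_Δ) = ⟨0; Ĥ^j E(F₀), Ĥ^{j−1} E(F₁), …, E(F_j)⟩, and its tightest
containing interval matrix is [−Σ_{i=0}^{j}|Ĥ^{j−i}|Fᵢ, Σ_{i=0}^{j}|Ĥ^{j−i}|Fᵢ]. -/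
theorem stmt14 {n q : ℕ} (Hhat ΔK : Matrix (Fin n) (Fin n) ℝ)
    (ΔS : Matrix (Fin n) (Fin q) ℝ) (MK : Matrix (Fin q) (Fin n) ℝ)
    (hΔK : ∀ i j, 0 ≤ ΔK i j) (hΔS : ∀ i j, 0 ≤ ΔS i j)
    (hMK : ΔK = ΔS * aent MK)
    (F : ℕ → Matrix (Fin n) (Fin q) ℝ)
    (hF0 : F 0 = ΔS)
    (hF : ∀ j, F (j + 1) = ΔK * ∑ i ∈ Finset.range (j + 1), aent (Hhat ^ (j - i)) * F i)
    (j : ℕ) :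
    (zonoL ((Tmap Hhat ΔK)^[j] (0, edecL ΔS)).1 ((Tmap Hhat ΔK)^[j] (0, edecL ΔS)).2 =
      zonoL 0 ((List.range (j + 1)).flatMap fun i =>
        (edecL (F i)).map fun X => Hhat ^ (j - i) * X)) ∧
    (zonoL ((Tmap Hhat ΔK)^[j] (0, edecL ΔS)).1 ((Tmap Hhat ΔK)^[j] (0, edecL ΔS)).2 ⊆
      intv 0 (∑ i ∈ Finset.range (j + 1), aent (Hhat ^ (j - i)) * F i)) ∧
    ∀ L U : Matrix (Fin n) (Fin q) ℝ,
      zonoL ((Tmap Hhat ΔK)^[j] (0, edecL ΔS)).1 ((Tmap Hhat ΔK)^[j] (0, edecL ΔS)).2 ⊆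
        box L U →
      intv 0 (∑ i ∈ Finset.range (j + 1), aent (Hhat ^ (j - i)) * F i) ⊆ box L U :=
  stmt14_general Hhat ΔK ΔS hΔK hΔS F hF0 hF j
end

section
/- Let H ∈ ℝ^{r×n}, b ∈ ℝ^r define the polytope X = {x | Hx ≤ b}. Let Δ ≥ 0 be an n×p nonnegative matrix and w ∈ ℝ^p a fixed vector. Then the set inclusion z ⊕ [−Δ, Δ]w ⊆ X (i.e., z + Dw ∈ X for all matrices D with |D| ≤ Δ entrywise) holds if and only if Hz + |H| Δ |w| ≤ b, where |H| and |w| denote entrywise absolute values. -/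
open Matrix

section BoxMaximum

variable {R m n : Type*} [CommRing R] [LinearOrder R] [IsStrictOrderedRing R]

lemma abs_coe_signType_le_one (s : SignType) : |(s : R)| ≤ 1 := by
  cases s <;> simp

lemma dotProduct_mulVec_le_of_abs_le [Fintype m] [Fintype n] {D Δ : Matrix m n R}
    (hD : ∀ k j, |D k j| ≤ Δ k j) (a : m → R) (w : n → R) :
    a ⬝ᵥ (D *ᵥ w) ≤ |a| ⬝ᵥ (Δ *ᵥ |w|) := by
  simp only [dotProduct, mulVec, Finset.mul_sum, Pi.abs_apply]
  refine Finset.sum_le_sum fun k _ => Finset.sum_le_sum fun j _ => ?_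
  calc a k * (D k j * w j) ≤ |a k * (D k j * w j)| := le_abs_self _
    _ = |a k| * (|D k j| * |w j|) := by rw [abs_mul, abs_mul]
    _ ≤ |a k| * (Δ k j * |w j|) := by gcongr; exact hD k j

def boxMaximizer (a : m → R) (Δ : Matrix m n R) (w : n → R) : Matrix m n R :=
  of fun k j => SignType.sign (a k) * Δ k j * SignType.sign (w j)

lemma abs_boxMaximizer_le {Δ : Matrix m n R} (hΔ : ∀ k j, 0 ≤ Δ k j) (a : m → R) (w : n → R)
    (k : m) (j : n) : |boxMaximizer a Δ w k j| ≤ Δ k j := by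
  rw [boxMaximizer, of_apply, abs_mul, abs_mul, abs_of_nonneg (hΔ k j)]
  calc |(SignType.sign (a k) : R)| * Δ k j * |(SignType.sign (w j) : R)| ≤ 1 * Δ k j * 1 := by
        gcongr <;> simp [hΔ k j, abs_coe_signType_le_one]
    _ = Δ k j := by ring

lemma dotProduct_boxMaximizer_mulVec [Fintype m] [Fintype n] (a : m → R) (Δ : Matrix m n R)
    (w : n → R) :
    a ⬝ᵥ (boxMaximizer a Δ w *ᵥ w) = |a| ⬝ᵥ (Δ *ᵥ |w|) := by
  simp only [dotProduct, mulVec, boxMaximizer, of_apply, Finset.mul_sum, Pi.abs_apply]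
  refine Finset.sum_congr rfl fun k _ => Finset.sum_congr rfl fun j _ => ?_
  rw [← self_mul_sign (a k), ← self_mul_sign (w j)]
  ring

end BoxMaximum

lemma aent_mul_mulVec_apply {r n p : ℕ} (H : Matrix (Fin r) (Fin n) ℝ)
    (Δ : Matrix (Fin n) (Fin p) ℝ) (v : Fin p → ℝ) (i : Fin r) :
    ((aent H * Δ) *ᵥ v) i = |H i| ⬝ᵥ (Δ *ᵥ v) := by
  rw [← mulVec_mulVec]
  rfl

/-- For the polytope X = {x | Hx ≤ b}:
z ⊕ [−Δ, Δ]w ⊆ X  ↔  Hz + |H| Δ |w| ≤ b. -/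
theorem stmt19 {r n p : ℕ} (H : Matrix (Fin r) (Fin n) ℝ) (b : Fin r → ℝ)
    (Δ : Matrix (Fin n) (Fin p) ℝ) (hΔ : ∀ i j, 0 ≤ Δ i j)
    (w : Fin p → ℝ) (z : Fin n → ℝ) :
    (∀ D : Matrix (Fin n) (Fin p) ℝ, (∀ i j, |D i j| ≤ Δ i j) →
      ∀ i, H.mulVec (z + D.mulVec w) i ≤ b i) ↔
    ∀ i, H.mulVec z i + ((aent H * Δ).mulVec fun j => |w j|) i ≤ b i := by
  have hrow : ∀ D i, (H *ᵥ (z + D *ᵥ w)) i = (H *ᵥ z) i + H i ⬝ᵥ (D *ᵥ w) := fun D i => by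
    rw [mulVec_add]; rfl
  have habs : (fun j => |w j|) = |w| := rfl
  simp only [hrow, habs, aent_mul_mulVec_apply]
  constructor
  · intro h i
    simpa only [dotProduct_boxMaximizer_mulVec] using
      h (boxMaximizer (H i) Δ w) (abs_boxMaximizer_le hΔ (H i) w) i
  · intro h D hD i
    exact (add_le_add le_rfl (dotProduct_mulVec_le_of_abs_le hD (H i) w)).trans (h i)
end
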